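/- arXiv:2502.13850 — 2 statements merged into one kernel-verified Lean document; each statement's English description precedes it below -/
import Mathlib

section
/- (Theorem 3.) An incompatibility measure ψ : P* → ℝ^A satisfies 'convex linearity', 'allocation of incompatibility', 'anonymity', and 'no cost—no incompatibility' if and only if it coincides with the Shapley incompatibility measure φ. -/
open Finset

variable {A : Type*} [Fintype A] [DecidableEq A]

/-- `p` restricted to nonempty subsets belongs to the set `P` of consistent collections. -/
def memP (p : Finset A → ℝ) : Prop :=
  ∃ π : Finset A → ℝ, (∀ W, 0 ≤ π W) ∧ (∑ W : Finset A, π W = 1) ∧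
    ∀ S : Finset A, S.Nonempty →
      p S = ∑ W ∈ Finset.univ.filter (fun W : Finset A => S ⊆ W), π W

/-- `p ∈ P*`: `p ∅ = 1` and the restriction of `p` to nonempty subsets lies in `P`. -/
def memPStar (p : Finset A → ℝ) : Prop :=
  p ∅ = 1 ∧ memP p

/-- The Shapley incompatibility measure:
`φ_a(p) = Σ_{S ⊆ A∖{a}} (|S|!(J−|S|−1)!/J!) (p_S − p_{S∪{a}})`. -/
noncomputable def shapley (p : Finset A → ℝ) (a : A) : ℝ :=
  ∑ S ∈ ((Finset.univ : Finset A).erase a).powerset,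
    ((S.card.factorial * (Fintype.card A - S.card - 1).factorial : ℝ) /
        (Fintype.card A).factorial) * (p S - p (insert a S))


/-- *Allocation of incompatibility*: `Σ_a ψ_a(p) = 1 − p_A`. -/
def Allocation (ψ : (Finset A → ℝ) → A → ℝ) : Prop :=
  ∀ p, memPStar p → ∑ a : A, ψ p a = 1 - p Finset.univ

/-- *Anonymity*: `ψ_a(p^π) = ψ_{π(a)}(p)` where `p^π_S = p_{π(S)}`. -/
def Anonymity (ψ : (Finset A → ℝ) → A → ℝ) : Prop :=
  ∀ π : Equiv.Perm A, ∀ p, memPStar p → ∀ a : A,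
    ψ (fun S => p (S.image π)) a = ψ p (π a)

/-- *Convex linearity*: `ψ_a(λp + (1−λ)p′) = λψ_a(p) + (1−λ)ψ_a(p′)`. -/
def ConvexLinearity (ψ : (Finset A → ℝ) → A → ℝ) : Prop :=
  ∀ p p', memPStar p → memPStar p' → ∀ l : ℝ, 0 ≤ l → l ≤ 1 → ∀ a : A,
    ψ (fun S => l * p S + (1 - l) * p' S) a = l * ψ p a + (1 - l) * ψ p' a

/-- *No cost—no incompatibility*: if `p_{S∪{a}} = p_S` for every `S ⊆ A ∖ {a}`, then
`ψ_a(p) = 0`. -/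
def NoCost (ψ : (Finset A → ℝ) → A → ℝ) : Prop :=
  ∀ p, memPStar p → ∀ a : A,
    (∀ S ∈ ((Finset.univ : Finset A).erase a).powerset, p (insert a S) = p S) →
    ψ p a = 0

/-!
Every `p ∈ P*` is a convex combination of the point-mass collections `diracColl W`, so by
Jensen's inequality in both directions a convex-linear measure is determined by its values on
them. On `diracColl W`, no cost—no incompatibility gives `0` to the axioms in `W`, anonymity
(via a transposition fixing `diracColl W`) makes the value constant on the axioms outside `W`,
and allocation forces that constant to be `1 / |A ∖ W|`. The Shapley measure is linear and
satisfies the four axioms; allocation is the efficiency of the Shapley value: in `∑ₐ φₐ(p)` the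
coefficient of `p_T` telescopes to `[T = ∅] - [T = A]`.
-/

-- The collection of the point mass at the world `W`: `S` is satisfied iff `S ⊆ W`.
def diracColl (W : Finset A) : Finset A → ℝ := fun S => if S ⊆ W then 1 else 0

theorem memPStar_diracColl (W : Finset A) : memPStar (diracColl W) := by
  refine ⟨by simp [diracColl], fun V => if V = W then 1 else 0, fun V => by positivity,
    by simp, fun S _ => ?_⟩
  simp [diracColl]

theorem memPStar.exists_eq_sum_smul_diracColl {p : Finset A → ℝ} (hp : memPStar p) :
    ∃ π : Finset A → ℝ, (∀ W, 0 ≤ π W) ∧ ∑ W, π W = 1 ∧ p = ∑ W, π W • diracColl W := by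
  obtain ⟨h0, π, hπ0, hπ1, hrep⟩ := hp
  refine ⟨π, hπ0, hπ1, funext fun S => ?_⟩
  simp only [Finset.sum_apply, Pi.smul_apply, diracColl, smul_eq_mul, mul_ite, mul_one, mul_zero,
    ← sum_filter]
  rcases S.eq_empty_or_nonempty with rfl | hS
  · simp [h0, hπ1]
  · exact hrep S hS

theorem convex_memPStar : Convex ℝ {p : Finset A → ℝ | memPStar p} := by
  rintro p ⟨hp0, π, hπ0, hπ1, hp⟩ p' ⟨hp0', π', hπ0', hπ1', hp'⟩ l m hl hm hlm
  refine ⟨by simp [hp0, hp0', hlm], l • π + m • π', fun W => ?_, ?_, fun S hS => ?_⟩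
  · simp only [Pi.add_apply, Pi.smul_apply, smul_eq_mul]
    have := hπ0 W; have := hπ0' W; positivity
  · simp [sum_add_distrib, ← mul_sum, hπ1, hπ1', hlm]
  · simp [hp S hS, hp' S hS, sum_add_distrib, mul_sum]

theorem memPStar.comp_image {p : Finset A → ℝ} (hp : memPStar p) (σ : Equiv.Perm A) :
    memPStar (fun S => p (S.image σ)) := by
  obtain ⟨h0, π, hπ0, hπ1, hrep⟩ := hp
  refine ⟨by simpa using h0, fun W => π (W.image σ), fun W => hπ0 _, ?_, fun S hS => ?_⟩
  · rw [← hπ1]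
    exact Fintype.sum_equiv (Equiv.finsetCongr σ) _ _ fun W => by
      simp [Equiv.finsetCongr, Finset.map_eq_image]
  · dsimp only
    rw [hrep _ (hS.image σ)]
    refine sum_nbij' (fun W => W.image σ.symm) (fun W => W.image σ) (fun W hW => ?_)
      (fun W hW => ?_) (by simp [image_image]) (by simp [image_image]) (by simp [image_image])
    · simp only [mem_filter_univ, image_subset_iff] at hW ⊢
      exact fun x hx => mem_image.2 ⟨σ x, hW x hx, σ.symm_apply_apply x⟩
    · simp only [mem_filter_univ] at hW ⊢
      exact image_subset_image hW

namespace ConvexLinearity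

variable {ψ ψ' : (Finset A → ℝ) → A → ℝ}

theorem apply_smul_add_smul (hψ : ConvexLinearity ψ) {p p' : Finset A → ℝ} (hp : memPStar p)
    (hp' : memPStar p') {l m : ℝ} (hl : 0 ≤ l) (hm : 0 ≤ m) (hlm : l + m = 1) (a : A) :
    ψ (l • p + m • p') a = l * ψ p a + m * ψ p' a := by
  obtain rfl : m = 1 - l := by linarith
  exact hψ p p' hp hp' l hl (by linarith) a

theorem convexOn (hψ : ConvexLinearity ψ) (a : A) :
    ConvexOn ℝ {p | memPStar p} (ψ · a) :=
  ⟨convex_memPStar, fun _ hp _ hp' _ _ hl hm hlm =>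
    (hψ.apply_smul_add_smul hp hp' hl hm hlm a).le⟩

theorem concaveOn (hψ : ConvexLinearity ψ) (a : A) :
    ConcaveOn ℝ {p | memPStar p} (ψ · a) :=
  ⟨convex_memPStar, fun _ hp _ hp' _ _ hl hm hlm =>
    (hψ.apply_smul_add_smul hp hp' hl hm hlm a).ge⟩

theorem apply_sum_smul (hψ : ConvexLinearity ψ) {ι : Type*} {t : Finset ι} {w : ι → ℝ}
    {q : ι → Finset A → ℝ} (hw0 : ∀ i ∈ t, 0 ≤ w i) (hw1 : ∑ i ∈ t, w i = 1)
    (hq : ∀ i ∈ t, memPStar (q i)) (a : A) :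
    ψ (∑ i ∈ t, w i • q i) a = ∑ i ∈ t, w i * ψ (q i) a :=
  le_antisymm ((hψ.convexOn a).map_sum_le hw0 hw1 hq) ((hψ.concaveOn a).le_map_sum hw0 hw1 hq)

theorem eq_of_diracColl (hψ : ConvexLinearity ψ) (hψ' : ConvexLinearity ψ')
    (h : ∀ W a, ψ (diracColl W) a = ψ' (diracColl W) a) {p : Finset A → ℝ} (hp : memPStar p)
    (a : A) : ψ p a = ψ' p a := by
  obtain ⟨π, hπ0, hπ1, rfl⟩ := hp.exists_eq_sum_smul_diracColl
  have hW : ∀ W ∈ (univ : Finset (Finset A)), memPStar (diracColl W) :=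
    fun W _ => memPStar_diracColl W
  rw [hψ.apply_sum_smul (fun W _ => hπ0 W) hπ1 hW, hψ'.apply_sum_smul (fun W _ => hπ0 W) hπ1 hW]
  simp only [h]

end ConvexLinearity

section Axioms

variable {ψ : (Finset A → ℝ) → A → ℝ}

theorem NoCost.apply_diracColl_of_mem (hψ : NoCost ψ) {W : Finset A} {a : A} (ha : a ∈ W) :
    ψ (diracColl W) a = 0 :=
  hψ _ (memPStar_diracColl W) a fun S _ => by simp [diracColl, insert_subset_iff, ha]

theorem diracColl_comp_image_swap {W : Finset A} {a b : A} (ha : a ∉ W) (hb : b ∉ W) :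
    (fun S => diracColl W (S.image (Equiv.swap a b))) = diracColl W := by
  have hswap : ∀ x, Equiv.swap a b x ∈ W ↔ x ∈ W := by
    intro x
    rw [Equiv.swap_apply_def]
    split_ifs <;> simp_all
  funext S
  simp [diracColl, hswap, subset_iff]

theorem Anonymity.apply_diracColl_eq (hψ : Anonymity ψ) {W : Finset A} {a b : A} (ha : a ∉ W)
    (hb : b ∉ W) : ψ (diracColl W) a = ψ (diracColl W) b := by
  simpa [diracColl_comp_image_swap ha hb] using hψ (Equiv.swap a b) _ (memPStar_diracColl W) a

theorem apply_diracColl (hAl : Allocation ψ) (hAn : Anonymity ψ) (hNC : NoCost ψ)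
    (W : Finset A) (a : A) : ψ (diracColl W) a = if a ∈ W then 0 else (#Wᶜ : ℝ)⁻¹ := by
  split_ifs with ha
  · exact hNC.apply_diracColl_of_mem ha
  have hsum := hAl _ (memPStar_diracColl W)
  have huniv : diracColl W univ = 0 := if_neg fun h => ha (h (mem_univ a))
  rw [huniv, ← sum_add_sum_compl W, sum_eq_zero fun b hb => hNC.apply_diracColl_of_mem hb,
    sum_congr rfl fun b hb => hAn.apply_diracColl_eq (mem_compl.1 hb) ha, sum_const,
    nsmul_eq_mul] at hsum
  exact eq_inv_of_mul_eq_one_right (by linarith)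

end Axioms

noncomputable def shapleyWeight (J s : ℕ) : ℝ :=
  (s.factorial * (J - s - 1).factorial : ℝ) / J.factorial

theorem shapley_eq_sum_shapleyWeight (p : Finset A → ℝ) (a : A) :
    shapley p a = ∑ S ∈ (univ.erase a).powerset,
      shapleyWeight (Fintype.card A) #S * (p S - p (insert a S)) :=
  rfl

theorem shapley_smul_add_smul (l m : ℝ) (p p' : Finset A → ℝ) (a : A) :
    shapley (l • p + m • p') a = l * shapley p a + m * shapley p' a := by
  simp only [shapley, Pi.add_apply, Pi.smul_apply, smul_eq_mul, mul_sum, ← sum_add_distrib]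
  exact sum_congr rfl fun _ _ => by ring

theorem shapley_comp_image (σ : Equiv.Perm A) (p : Finset A → ℝ) (a : A) :
    shapley (fun S => p (S.image σ)) a = shapley p (σ a) := by
  refine sum_nbij' (fun S => S.image σ) (fun S => S.image σ.symm) (fun S hS => ?_)
    (fun S hS => ?_) (by simp [image_image]) (by simp [image_image]) (fun S _ => ?_)
  · simp_all [subset_erase]
  · simp_all [subset_erase, Equiv.symm_apply_eq]
  · simp [card_image_of_injective _ σ.injective, image_insert]

theorem sum_sum_powerset_erase (f : Finset A → ℝ) :
    ∑ a, ∑ S ∈ (univ.erase a).powerset, f S = ∑ S, (#Sᶜ : ℝ) * f S := by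
  have hpow : ∀ a : A, (univ.erase a).powerset = univ.filter (a ∉ ·) := fun a => by
    ext S; simp [subset_erase]
  simp_rw [hpow, sum_filter]
  rw [sum_comm]
  refine sum_congr rfl fun S _ => ?_
  rw [← sum_filter, sum_const, nsmul_eq_mul, filter_notMem_eq_sdiff, compl_eq_univ_sdiff]

theorem sum_sum_powerset_erase_insert (g : Finset A → ℝ) :
    ∑ a, ∑ S ∈ (univ.erase a).powerset, g (insert a S) = ∑ T, (#T : ℝ) * g T := by
  have hins : ∀ a : A, ∑ S ∈ (univ.erase a).powerset, g (insert a S) =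
      ∑ T, if a ∈ T then g T else 0 := fun a => by
    have := sum_powerset_insert (notMem_erase a univ) fun T => if a ∈ T then g T else 0
    rw [insert_erase (mem_univ a), powerset_univ] at this
    rw [this, sum_eq_zero fun S hS => if_neg ?_, zero_add]
    · simp
    · simpa [subset_erase] using hS
  simp_rw [hins]
  rw [sum_comm]
  refine sum_congr rfl fun T _ => ?_
  rw [← sum_filter, sum_const, nsmul_eq_mul, filter_mem_eq_inter, univ_inter]

theorem shapleyWeight_balance {J t : ℕ} (ht : t ≤ J) :
    ((J - t : ℕ) : ℝ) * shapleyWeight J t - t * shapleyWeight J (t - 1) =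
      (if t = 0 then 1 else 0) - (if t = J then 1 else 0) := by
  obtain ⟨k, rfl⟩ := Nat.exists_eq_add_of_le ht
  have hsub : ∀ a b c : ℕ, a + b + c - a = b + c := by omega
  rcases t with _ | t <;> rcases k with _ | k
  all_goals simp [shapleyWeight, Nat.factorial_succ, hsub]
  all_goals field_simp
  all_goals ring

theorem sum_shapley (p : Finset A → ℝ) : ∑ a, shapley p a = p ∅ - p univ := by
  set J := Fintype.card A
  have hcard : ∀ a : A, ∀ S ∈ (univ.erase a).powerset, #S = #(insert a S) - 1 := fun a S hS => by
    rw [card_insert_of_notMem (by simpa [subset_erase] using hS), Nat.add_sub_cancel]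
  calc ∑ a, shapley p a
      = ∑ a, ∑ S ∈ (univ.erase a).powerset, shapleyWeight J #S * p S -
          ∑ a, ∑ S ∈ (univ.erase a).powerset,
            shapleyWeight J (#(insert a S) - 1) * p (insert a S) := by
        rw [← sum_sub_distrib]
        refine sum_congr rfl fun a _ => ?_
        rw [shapley_eq_sum_shapleyWeight, ← sum_sub_distrib]
        exact sum_congr rfl fun S hS => by rw [← hcard a S hS, mul_sub]
    _ = ∑ T, (((J - #T : ℕ) : ℝ) * shapleyWeight J #T - #T * shapleyWeight J (#T - 1)) * p T := by
        rw [sum_sum_powerset_erase, sum_sum_powerset_erase_insert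
          (fun T => shapleyWeight J (#T - 1) * p T), ← sum_sub_distrib]
        exact sum_congr rfl fun T _ => by rw [card_compl]; ring
    _ = ∑ T, ((if T = ∅ then 1 else 0) - (if T = univ then 1 else 0)) * p T := by
        refine sum_congr rfl fun T _ => ?_
        rw [shapleyWeight_balance (card_le_univ T)]
        simp only [card_eq_zero, card_eq_iff_eq_univ]
    _ = p ∅ - p univ := by simp [sub_mul, sum_sub_distrib]

theorem convexLinearity_shapley : ConvexLinearity (shapley (A := A)) :=
  fun p p' _ _ l _ _ a => shapley_smul_add_smul l (1 - l) p p' a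

theorem allocation_shapley : Allocation (shapley (A := A)) :=
  fun p hp => by rw [sum_shapley, hp.1]

theorem anonymity_shapley : Anonymity (shapley (A := A)) :=
  fun σ p _ a => shapley_comp_image σ p a

theorem noCost_shapley : NoCost (shapley (A := A)) :=
  fun _ _ _ h => sum_eq_zero fun S hS => by rw [h S hS, sub_self, mul_zero]

theorem theorem3_general (ψ : (Finset A → ℝ) → A → ℝ) :
    (ConvexLinearity ψ ∧ Allocation ψ ∧ Anonymity ψ ∧ NoCost ψ) ↔
      ∀ p, memPStar p → ∀ a : A, ψ p a = shapley p a := by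
  constructor
  · rintro ⟨hCL, hAl, hAn, hNC⟩ p hp a
    refine hCL.eq_of_diracColl convexLinearity_shapley (fun W b => ?_) hp a
    rw [apply_diracColl hAl hAn hNC,
      apply_diracColl allocation_shapley anonymity_shapley noCost_shapley]
  · intro h
    refine ⟨fun p p' hp hp' l hl0 hl1 a => ?_, fun p hp => ?_, fun σ p hp a => ?_,
      fun p hp a ha => ?_⟩
    · have hmem : memPStar (fun S => l * p S + (1 - l) * p' S) :=
        convex_memPStar hp hp' hl0 (sub_nonneg.2 hl1) (add_sub_cancel l 1)
      rw [h _ hmem, h p hp, h p' hp']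
      exact convexLinearity_shapley p p' hp hp' l hl0 hl1 a
    · simp only [h p hp]
      exact allocation_shapley p hp
    · rw [h _ (hp.comp_image σ), h p hp]
      exact anonymity_shapley σ p hp a
    · rw [h p hp]
      exact noCost_shapley p hp a ha

/-- Theorem 3: an incompatibility measure satisfies *convex linearity*, *allocation of
incompatibility*, *anonymity* and *no cost—no incompatibility* iff it coincides with the
Shapley incompatibility measure on `P*`. -/
theorem theorem3 (hJ : 1 ≤ Fintype.card A) (ψ : (Finset A → ℝ) → A → ℝ) :
    (ConvexLinearity ψ ∧ Allocation ψ ∧ Anonymity ψ ∧ NoCost ψ) ↔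
      ∀ p, memPStar p → ∀ a : A, ψ p a = shapley p a :=
  theorem3_general ψ
end

section
/- (Proposition 1.) For every a ∈ A and every p ∈ P*, the Shapley incompatibility measure satisfies φ_a(p) = Σ_{S ⊆ A with a ∉ S} ( Σ_{T : S ⊆ T ⊆ A} (−1)^{|T ∖ S|} p_T ) / |A ∖ S|; that is, φ_a(p) = Σ_{S ⊆ A : a ∉ S} α*^p_S / |A ∖ S|. -/
/-!
Expanding `α*` and exchanging the two sums writes the right-hand side as `Σ_T c_a(T) p_T`,
where `c_a(T) = Σ_{S ⊆ T ∖ {a}} (-1)^{|T ∖ S|} / |A ∖ S|`. Adding `a` to a set `T ∌ a` only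
flips the sign of `c_a(T)`, and for `a ∉ T` the substitution `U = T ∖ S` turns `c_a(T)` into
the Beta sum `Σ_j C(t, j) (-1)^j / (m + 1 + j) = ∫₀¹ x^m (1 - x)^t dx = t! m! / (t + m + 1)!`
with `t = |T|` and `m + 1 = |A ∖ T|`: this is the Shapley weight of `T`, so both sides agree
coefficientwise.
-/

open Finset

variable {A : Type*} [Fintype A] [DecidableEq A]

/-- The Möbius transform `α*^p_S = Σ_{T ⊇ S} (−1)^{|T ∖ S|} p_T` (defined for all
`S ⊆ A`, including `S = ∅`). -/
def alphaStar (p : Finset A → ℝ) (S : Finset A) : ℝ :=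
  ∑ T ∈ Finset.univ.filter (fun T : Finset A => S ⊆ T), (-1 : ℝ) ^ (T \ S).card * p T

open scoped Nat

theorem sum_range_choose_mul_neg_one_pow_div (t m : ℕ) :
    ∑ j ∈ range (t + 1), (t.choose j : ℝ) * (-1) ^ j / (m + 1 + j) =
      t ! * m ! / (t + m + 1)! := by
  induction t generalizing m with
  | zero =>
    simp [Nat.factorial_succ]
    field_simp
  | succ t ih =>
    have pascal : ∑ j ∈ range (t + 2), ((t + 1).choose j : ℝ) * (-1) ^ j / (m + 1 + j) =
        ∑ j ∈ range (t + 1), (t.choose j : ℝ) * (-1) ^ j / (m + 1 + j) -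
          ∑ j ∈ range (t + 1), (t.choose j : ℝ) * (-1) ^ j / ((m + 1 : ℕ) + 1 + j) := by
      have hlast : ∑ j ∈ range (t + 2), (t.choose j : ℝ) * (-1) ^ j / (m + 1 + j) =
          ∑ j ∈ range (t + 1), (t.choose j : ℝ) * (-1) ^ j / (m + 1 + j) := by
        simp [sum_range_succ _ (t + 1)]
      have hterm (j : ℕ) :
          ((t + 1).choose (j + 1) : ℝ) * (-1) ^ (j + 1) / (m + 1 + (j + 1 : ℕ)) =
          (t.choose (j + 1) : ℝ) * (-1) ^ (j + 1) / (m + 1 + (j + 1 : ℕ)) -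
            (t.choose j : ℝ) * (-1) ^ j / ((m + 1 : ℕ) + 1 + j) := by
        rw [Nat.choose_succ_succ']
        push_cast
        ring
      rw [sum_range_succ', ← hlast, sum_range_succ' _ (t + 1)]
      simp only [hterm, sum_sub_distrib, Nat.choose_zero_right]
      ring
    rw [pascal, ih, ih, show t + (m + 1) + 1 = t + m + 1 + 1 by ring,
      show t + 1 + m + 1 = t + m + 1 + 1 by ring, Nat.factorial_succ (t + m + 1),
      Nat.factorial_succ t, Nat.factorial_succ m]
    push_cast
    field_simp
    ring

theorem sum_powerset_neg_one_pow_card_sdiff_div (T : Finset A) (hT : T ≠ univ) :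
    ∑ S ∈ T.powerset, (-1 : ℝ) ^ #(T \ S) / #(univ \ S) =
      (#T)! * (Fintype.card A - #T - 1)! / (Fintype.card A)! := by
  obtain ⟨m, hm⟩ : ∃ m, #(univ \ T) = m + 1 :=
    Nat.exists_eq_succ_of_ne_zero <| card_ne_zero.2 <|
      sdiff_nonempty.2 fun h => hT (univ_subset_iff.1 h)
  have hcard : Fintype.card A = #T + m + 1 := by
    rw [← card_univ, ← card_sdiff_add_card_inter univ T, univ_inter, hm]; ring
  calc ∑ S ∈ T.powerset, (-1 : ℝ) ^ #(T \ S) / #(univ \ S)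
      = ∑ U ∈ T.powerset, (-1 : ℝ) ^ #U / (m + 1 + #U) := by
        refine sum_nbij' (T \ ·) (T \ ·) (by simp) (by simp)
          (fun S hS => Finset.sdiff_sdiff_eq_self (mem_powerset.1 hS))
          (fun U hU => Finset.sdiff_sdiff_eq_self (mem_powerset.1 hU)) fun S hS => ?_
        have hST := mem_powerset.1 hS
        rw [card_sdiff_of_subset hST, card_univ_sdiff, hcard,
          show #T + m + 1 - #S = m + 1 + (#T - #S) by have := card_le_card hST; omega]
        simp only [Nat.cast_add, Nat.cast_one]
    _ = ∑ j ∈ range (#T + 1), ((#T).choose j : ℝ) * (-1) ^ j / (m + 1 + j) := by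
        rw [sum_powerset_apply_card (fun j => (-1 : ℝ) ^ j / (m + 1 + j))]
        simp only [nsmul_eq_mul, mul_div_assoc]
    _ = (#T)! * (Fintype.card A - #T - 1)! / (Fintype.card A)! := by
        rw [sum_range_choose_mul_neg_one_pow_div, hcard, show #T + m + 1 - #T - 1 = m by omega]

noncomputable def shapleyCoeff (a : A) (T : Finset A) : ℝ :=
  ∑ S ∈ (T.erase a).powerset, (-1 : ℝ) ^ #(T \ S) / #(univ \ S)

theorem shapleyCoeff_of_notMem {a : A} {T : Finset A} (ha : a ∉ T) :
    shapleyCoeff a T = (#T)! * (Fintype.card A - #T - 1)! / (Fintype.card A)! := by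
  rw [shapleyCoeff, erase_eq_of_notMem ha,
    sum_powerset_neg_one_pow_card_sdiff_div T (ne_of_mem_of_not_mem' (mem_univ a) ha).symm]

theorem shapleyCoeff_insert {a : A} {T : Finset A} (ha : a ∉ T) :
    shapleyCoeff a (insert a T) = -shapleyCoeff a T := by
  rw [shapleyCoeff, shapleyCoeff, erase_insert ha, erase_eq_of_notMem ha, ← sum_neg_distrib]
  refine sum_congr rfl fun S hS => ?_
  have haS : a ∉ S := fun h => ha (mem_powerset.1 hS h)
  rw [insert_sdiff_of_notMem _ haS, card_insert_of_notMem fun h => ha (mem_sdiff.1 h).1, pow_succ]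
  ring

theorem sum_alphaStar_div_eq_sum_shapleyCoeff_mul (p : Finset A → ℝ) (a : A) :
    ∑ S ∈ univ.filter (fun S : Finset A => a ∉ S), alphaStar p S / #(univ \ S) =
      ∑ T, shapleyCoeff a T * p T := by
  simp only [alphaStar, shapleyCoeff, sum_div, sum_mul]
  refine (sum_comm' fun S T => ?_).trans (sum_congr rfl fun T _ => sum_congr rfl fun S _ => ?_)
  · simp only [mem_filter, mem_univ, true_and, mem_powerset, subset_erase]
    tauto
  · ring

theorem proposition1_general
    (a : A) (p : Finset A → ℝ) :
    shapley p a =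
      ∑ S ∈ Finset.univ.filter (fun S : Finset A => a ∉ S),
        alphaStar p S / ((Finset.univ \ S).card : ℝ) := by
  rw [sum_alphaStar_div_eq_sum_shapleyCoeff_mul, ← powerset_univ, ← insert_erase (mem_univ a),
    sum_powerset_insert (notMem_erase a univ), ← sum_add_distrib, shapley]
  refine sum_congr rfl fun S hS => ?_
  have ha : a ∉ S := fun h => notMem_erase a univ (mem_powerset.1 hS h)
  rw [shapleyCoeff_insert ha, shapleyCoeff_of_notMem ha]
  ring

/-- Proposition 1: for `p ∈ P*` and `a ∈ A`,
`φ_a(p) = Σ_{S ⊆ A, a ∉ S} α*^p_S / |A ∖ S|`. -/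
theorem proposition1 (hJ : 1 ≤ Fintype.card A)
    (a : A) (p : Finset A → ℝ) (hp : memPStar p) :
    shapley p a =
      ∑ S ∈ Finset.univ.filter (fun S : Finset A => a ∉ S),
        alphaStar p S / ((Finset.univ \ S).card : ℝ) :=
  proposition1_general a p
end
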